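/- arXiv:1901.08519 — 6 statements merged into one kernel-verified Lean document; each statement's English description precedes it below -/
import Mathlib

section
/- Assume |f| ≤ M, let K = max(1,M), p = min_{1≤j≤m} P(A_j) > 0, and let n > 0, n_N > 0, Λ ≥ 0, Λ' ≥ 0 be reals with Λ < p·√n. Suppose |√n·(μ(g) − P(g))| ≤ Λ for every g ∈ {f·1_{A_1},…,f·1_{A_m}, 1_{A_1},…,1_{A_m}}, and that p'_1,…,p'_m ∈ [0,1] satisfy √(n_N)·|p'_j − P(A_j)| ≤ Λ' for all j. Then, with ν̃(f) = Σ_{j=1}^m [p'_j/μ(1_{A_j})]·μ(f·1_{A_j}), one has |√n·(ν̃(f) − P(f))| ≤ m·K·(2Λ + √(n/n_N)·Λ') / (p − Λ/√n). -/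
/-!
The cells partition `𝒳`, so `P(f) = Σ_j P(f 1_{A_j})` and it suffices to bound the error on
each cell. Writing `a = μ(f 1_{A_j})`, `I = P(f 1_{A_j})`, `q = μ(1_{A_j})`, `r = P(A_j)`,
`w = p'_j`, one has `w a / q − I = (w / q)(a − I) + (I / q)((w − r) − (q − r))`,
where `|w| ≤ 1`, `|I| ≤ K` and `q ≥ p − Λ/√n > 0`; each cell thus contributes at most
`K(2Λ + √(n/n_N)Λ') / (p − Λ/√n)` after scaling by `√n`.
-/

open MeasureTheory Finset

lemma mul_indicator_one_eq_indicator {α M₀ : Type*} [MulZeroOneClass M₀] (f : α → M₀)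
    (s : Set α) : (fun x => f x * s.indicator 1 x) = s.indicator f := by
  ext x
  simpa using (Set.indicator_mul_right s f 1 (i := x)).symm

section Partition

variable {X ι : Type*} [MeasurableSpace X] {P : Measure X}

lemma integral_eq_sum_integral_mul_indicator {f : X → ℝ} (hf : Integrable f P) (t : Finset ι)
    {A : ι → Set X} (hmeas : ∀ j ∈ t, MeasurableSet (A j))
    (hdisj : Set.PairwiseDisjoint ↑t A) (hcover : ⋃ j ∈ t, A j = Set.univ) :
    ∫ x, f x ∂P = ∑ j ∈ t, ∫ x, f x * (A j).indicator 1 x ∂P := by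
  simp_rw [mul_indicator_one_eq_indicator]
  rw [← setIntegral_univ, ← hcover,
    integral_biUnion_finset t hmeas hdisj fun j _ => hf.integrableOn]
  exact sum_congr rfl fun j hj => (integral_indicator (hmeas j hj)).symm

lemma abs_integral_mul_indicator_le [IsProbabilityMeasure P] {f : X → ℝ} {K : ℝ}
    (hf : ∀ x, |f x| ≤ K) (A : Set X) : |∫ x, f x * A.indicator 1 x ∂P| ≤ K := by
  rw [mul_indicator_one_eq_indicator]
  simpa using norm_integral_le_of_norm_le_const (μ := P) (C := K) <| .of_forall fun x =>
    (norm_indicator_le_norm_self f x).trans (hf x)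

end Partition

lemma sub_div_le_of_abs_mul_sub_le {s q r p Λ : ℝ} (hs : 0 < s) (h : |s * (q - r)| ≤ Λ)
    (hp : p ≤ r) : p - Λ / s ≤ q := by
  rw [abs_mul, abs_of_pos hs, ← le_div_iff₀' hs] at h
  linarith [(abs_le.mp h).1]

lemma abs_sqrt_mul_le_sqrt_div_mul {n N d c : ℝ} (hN : 0 < N) (h : √N * |d| ≤ c) :
    |√n * d| ≤ √(n / N) * c := by
  have hsN : 0 < √N := Real.sqrt_pos.mpr hN
  rw [abs_mul, abs_of_nonneg (Real.sqrt_nonneg n), Real.sqrt_div' n hN.le]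
  calc √n * |d| = √n / √N * (√N * |d|) := by field_simp
    _ ≤ √n / √N * c := by gcongr

lemma abs_mul_div_mul_sub_le {s q a I r w Λ c K D : ℝ} (hD : 0 < D) (hqD : D ≤ q)
    (hK : 1 ≤ K) (hΛ : 0 ≤ Λ) (hI : |I| ≤ K) (hw : |w| ≤ 1)
    (ha : |s * (a - I)| ≤ Λ) (hq : |s * (q - r)| ≤ Λ) (hwr : |s * (w - r)| ≤ c) :
    |s * (w / q * a - I)| ≤ K * (2 * Λ + c) / D := by
  have hq0 : 0 < q := hD.trans_le hqD
  have hdecomp : s * (w / q * a - I)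
      = w / q * (s * (a - I)) + I / q * (s * (w - r) - s * (q - r)) := by
    field_simp
    ring
  have hwq : |w / q| ≤ 1 / D := by
    rw [abs_div, abs_of_pos hq0]
    exact div_le_div₀ zero_le_one hw hD hqD
  have hIq : |I / q| ≤ K / D := by
    rw [abs_div, abs_of_pos hq0]
    exact div_le_div₀ (by linarith) hI hD hqD
  calc |s * (w / q * a - I)|
      ≤ |w / q| * |s * (a - I)| + |I / q| * |s * (w - r) - s * (q - r)| := by
        rw [hdecomp, ← abs_mul, ← abs_mul]
        exact abs_add_le _ _
    _ ≤ 1 / D * Λ + K / D * (c + Λ) := by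
        gcongr
        exact (abs_sub _ _).trans (add_le_add hwr hq)
    _ = (Λ + K * (c + Λ)) / D := by ring
    _ ≤ K * (2 * Λ + c) / D := by
        gcongr
        nlinarith

theorem stmt_5_general {𝒳 : Type*} [MeasurableSpace 𝒳] (P : Measure 𝒳) [IsProbabilityMeasure P]
    (m : ℕ) (A : ℕ → Set 𝒳)
    (hmeas : ∀ j < m, MeasurableSet (A j))
    (hdisj : ∀ j < m, ∀ k < m, j ≠ k → Disjoint (A j) (A k))
    (hcover : ⋃ j ∈ Finset.range m, A j = Set.univ)
    (f : 𝒳 → ℝ) (hf : Measurable f) (M : ℝ) (hfb : ∀ x, |f x| ≤ M)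
    (K : ℝ) (hK : K = max 1 M)
    (p : ℝ) (hp : IsLeast {r : ℝ | ∃ j < m, r = (P (A j)).toReal} p)
    (n nN Λ Λ' : ℝ) (hnN : 0 < nN) (hΛ0 : 0 ≤ Λ)
    (hΛp : Λ < p * Real.sqrt n)
    (μ : (𝒳 → ℝ) → ℝ)
    (hμf : ∀ j < m, |Real.sqrt n * (μ (fun x => f x * (A j).indicator (1 : 𝒳 → ℝ) x)
        - ∫ x, f x * (A j).indicator (1 : 𝒳 → ℝ) x ∂P)| ≤ Λ)
    (hμA : ∀ j < m,
      |Real.sqrt n * (μ ((A j).indicator (1 : 𝒳 → ℝ)) - (P (A j)).toReal)| ≤ Λ)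
    (p' : ℕ → ℝ) (hp'01 : ∀ j < m, 0 ≤ p' j ∧ p' j ≤ 1)
    (hp' : ∀ j < m, Real.sqrt nN * |p' j - (P (A j)).toReal| ≤ Λ') :
    |Real.sqrt n * ((∑ j ∈ Finset.range m, p' j / μ ((A j).indicator (1 : 𝒳 → ℝ))
          * μ (fun x => f x * (A j).indicator (1 : 𝒳 → ℝ) x)) - ∫ x, f x ∂P)|
      ≤ (m : ℝ) * K * (2 * Λ + Real.sqrt (n / nN) * Λ') / (p - Λ / Real.sqrt n) := by
  have hs : 0 < √n := (Real.sqrt_nonneg n).lt_of_ne fun h => by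
    rw [← h, mul_zero] at hΛp; linarith
  have hD : 0 < p - Λ / √n := sub_pos.mpr ((div_lt_iff₀ hs).mpr hΛp)
  have hK1 : 1 ≤ K := hK ▸ le_max_left 1 M
  have hfK : ∀ x, |f x| ≤ K := fun x => (hfb x).trans (hK ▸ le_max_right 1 M)
  have hfint : Integrable f P :=
    (integrable_const K).mono' hf.aestronglyMeasurable (.of_forall fun x => hfK x)
  rw [integral_eq_sum_integral_mul_indicator hfint (range m) (by simpa using hmeas)
      (fun j hj k hk => hdisj j (by simpa using hj) k (by simpa using hk)) hcover,
    ← sum_sub_distrib, mul_sum]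
  refine (abs_sum_le_sum_abs _ _).trans <| (sum_le_card_nsmul _ _
    (K * (2 * Λ + √(n / nN) * Λ') / (p - Λ / √n)) fun j hj => ?_).trans_eq ?_
  · have hj : j < m := mem_range.mp hj
    exact abs_mul_div_mul_sub_le hD
      (sub_div_le_of_abs_mul_sub_le hs (hμA j hj) (hp.2 ⟨j, hj, rfl⟩))
      hK1 hΛ0 (abs_integral_mul_indicator_le hfK _)
      (abs_le.mpr ⟨by linarith [(hp'01 j hj).1], (hp'01 j hj).2⟩)
      (hμf j hj) (hμA j hj) (abs_sqrt_mul_le_sqrt_div_mul hnN (hp' j hj))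
  · rw [card_range, nsmul_eq_mul]
    ring

/-- Uniform bound on one learned raking-ratio step: if `|f| ≤ M`, `K = max(1,M)`,
`p = min_j P(A_j) > 0`, `Λ < p√n`, the deviations of `μ` on the functions `f·1_{A_j}`
and `1_{A_j}` are at most `Λ/√n`, and `√(n_N)|p'_j − P(A_j)| ≤ Λ'` with `p'_j ∈ [0,1]`,
then `|√n(ν̃(f) − P(f))| ≤ mK(2Λ + √(n/n_N)Λ')/(p − Λ/√n)`. -/
theorem stmt_5 {𝒳 : Type*} [MeasurableSpace 𝒳] (P : Measure 𝒳) [IsProbabilityMeasure P]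
    (m : ℕ) (hm : 1 ≤ m) (A : ℕ → Set 𝒳)
    (hmeas : ∀ j < m, MeasurableSet (A j))
    (hdisj : ∀ j < m, ∀ k < m, j ≠ k → Disjoint (A j) (A k))
    (hcover : ⋃ j ∈ Finset.range m, A j = Set.univ)
    (f : 𝒳 → ℝ) (hf : Measurable f) (M : ℝ) (hfb : ∀ x, |f x| ≤ M)
    (K : ℝ) (hK : K = max 1 M)
    (p : ℝ) (hp : IsLeast {r : ℝ | ∃ j < m, r = (P (A j)).toReal} p) (hp0 : 0 < p)
    (n nN Λ Λ' : ℝ) (hn : 0 < n) (hnN : 0 < nN) (hΛ0 : 0 ≤ Λ) (hΛ'0 : 0 ≤ Λ')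
    (hΛp : Λ < p * Real.sqrt n)
    (μ : (𝒳 → ℝ) → ℝ)
    (hμf : ∀ j < m, |Real.sqrt n * (μ (fun x => f x * (A j).indicator (1 : 𝒳 → ℝ) x)
        - ∫ x, f x * (A j).indicator (1 : 𝒳 → ℝ) x ∂P)| ≤ Λ)
    (hμA : ∀ j < m,
      |Real.sqrt n * (μ ((A j).indicator (1 : 𝒳 → ℝ)) - (P (A j)).toReal)| ≤ Λ)
    (p' : ℕ → ℝ) (hp'01 : ∀ j < m, 0 ≤ p' j ∧ p' j ≤ 1)
    (hp' : ∀ j < m, Real.sqrt nN * |p' j - (P (A j)).toReal| ≤ Λ') :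
    |Real.sqrt n * ((∑ j ∈ Finset.range m, p' j / μ ((A j).indicator (1 : 𝒳 → ℝ))
          * μ (fun x => f x * (A j).indicator (1 : 𝒳 → ℝ) x)) - ∫ x, f x ∂P)|
      ≤ (m : ℝ) * K * (2 * Λ + Real.sqrt (n / nN) * Λ') / (p - Λ / Real.sqrt n) :=
  stmt_5_general P m A hmeas hdisj hcover f hf M hfb K hK p hp n nN Λ Λ' hnN hΛ0 hΛp μ hμf hμA p'
    hp'01 hp'
end

section
/- Let Λ_n = max( sup_{0≤N≤N₀} ‖α̃_n^(N)‖_F , sup_{0≤N≤N₀} ‖α_n^(N)‖_F ) and Λ'_n = max_{1≤N≤N₀} max_{1≤j≤m_N} |√(n_N)·(ℙ'_N(A_j^(N)) − P(A_j^(N)))|. On the event B_{n,N₀} ∩ {Λ_n < p_(1)·√n}, where p_(1) = min_{1≤j≤m_1} P(A_j^(1)), one has ‖α̃_n^(1) − α_n^(1)‖_F ≤ [ m_1·K_F·Λ'_n / (p_(1) − Λ_n/√n) ]·√(n/n_1)·(1 + Λ_n/√n). -/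
open MeasureTheory ProbabilityTheory

/-- Real-valued indicator of a set. -/
noncomputable def ind {𝒳 : Type*} (A : Set 𝒳) : 𝒳 → ℝ := A.indicator 1

/-- Empirical measure of `f` based on the sample `X 0, …, X (n−1)`. -/
noncomputable def empMeas {𝒳 Ω : Type*} (n : ℕ) (X : ℕ → Ω → 𝒳) (ω : Ω) (f : 𝒳 → ℝ) : ℝ :=
  (∑ i ∈ Finset.range n, f (X i ω)) / n

/-- One raking-ratio step with weights `w` over the partition `A 0, …, A (m−1)`
(a vanishing denominator yields `0`, as division by zero is `0`). -/
noncomputable def rakeStep {𝒳 : Type*} (m : ℕ) (A : ℕ → Set 𝒳) (w : ℕ → ℝ)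
    (μ : (𝒳 → ℝ) → ℝ) (f : 𝒳 → ℝ) : ℝ :=
  ∑ j ∈ Finset.range m, w j / μ (ind (A j)) * μ (fun x => f x * ind (A j) x)

/-- Raking-ratio empirical measure using the weights `w N j` at stage `N` for the cell
`A N j`; `w N j = P(A_j^{(N)})` gives `ℙ_n^{(N)}` and `w N j = ℙ'_N(A_j^{(N)})` gives
the learned version `ℙ̃_n^{(N)}`. -/
noncomputable def rakedMeas {𝒳 Ω : Type*} (w : ℕ → ℕ → ℝ) (m : ℕ → ℕ)
    (A : ℕ → ℕ → Set 𝒳) (n : ℕ) (X : ℕ → Ω → 𝒳) (ω : Ω) : ℕ → (𝒳 → ℝ) → ℝ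
  | 0 => empMeas n X ω
  | N + 1 => rakeStep (m (N + 1)) (A (N + 1)) (w (N + 1)) (rakedMeas w m A n X ω N)

set_option maxHeartbeats 1600000 in
/-- On the event `B_{n,N₀} ∩ {Λ_n < p_(1)√n}`, where `Λ_n` bounds all the deviations
`|α̃_n^{(N)}(f)|`, `|α_n^{(N)}(f)|` for `0 ≤ N ≤ N₀`, `f ∈ F`, and `Λ'_n` bounds all the
deviations `|√(n_N)(ℙ'_N(A_j^{(N)}) − P(A_j^{(N)}))|`, one has
`‖α̃_n^{(1)} − α_n^{(1)}‖_F ≤ [m₁ K_F Λ'_n/(p_(1) − Λ_n/√n)]·√(n/n₁)·(1 + Λ_n/√n)`. -/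
theorem stmt_7 {𝒳 Ω : Type*} [MeasurableSpace 𝒳] [MeasurableSpace Ω]
    (P : Measure 𝒳) [IsProbabilityMeasure P]
    (Pr : Measure Ω) [IsProbabilityMeasure Pr]
    (N₀ : ℕ) (hN₀ : 1 ≤ N₀) (m : ℕ → ℕ) (A : ℕ → ℕ → Set 𝒳)
    (hmeas : ∀ N ∈ Finset.Icc 1 N₀, ∀ j < m N, MeasurableSet (A N j))
    (hdisj : ∀ N ∈ Finset.Icc 1 N₀, ∀ j < m N, ∀ k < m N, j ≠ k → Disjoint (A N j) (A N k))
    (hcover : ∀ N ∈ Finset.Icc 1 N₀, ⋃ j ∈ Finset.range (m N), A N j = Set.univ)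
    (hppos : ∀ N ∈ Finset.Icc 1 N₀, ∀ j < m N, 0 < P (A N j))
    (n : ℕ) (hn : 1 ≤ n) (X : ℕ → Ω → 𝒳)
    (hXmeas : ∀ i, Measurable (X i))
    (hXindep : iIndepFun (fun i : Fin n => X i) Pr)
    (hXlaw : ∀ i : Fin n, Measure.map (X i) Pr = P)
    (nY : ℕ → ℕ) (hnY : ∀ N ∈ Finset.Icc 1 N₀, 1 ≤ nY N)
    (Y : ℕ → ℕ → Ω → 𝒳) (hYmeas : ∀ N i, Measurable (Y N i))
    (hYindep : ∀ N ∈ Finset.Icc 1 N₀,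
      iIndepFun (fun i : Fin (nY N) => Y N i) Pr)
    (hYlaw : ∀ N ∈ Finset.Icc 1 N₀, ∀ i < nY N, Measure.map (Y N i) Pr = P)
    (F : Set (𝒳 → ℝ)) (hFcount : F.Countable) (hFmeas : ∀ f ∈ F, Measurable f)
    (MF : ℝ) (hMF : ∀ f ∈ F, ∀ x, |f x| ≤ MF)
    (hFind : ∀ N ∈ Finset.Icc 1 N₀, ∀ j < m N, ind (A N j) ∈ F)
    (hFstable : ∀ f ∈ F, ∀ N ∈ Finset.Icc 1 N₀, ∀ j < m N,
      (fun x => f x * ind (A N j) x) ∈ F)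
    (p1 : ℝ) (hp1 : IsLeast {r : ℝ | ∃ j < m 1, r = (P (A 1 j)).toReal} p1)
    (ω : Ω)
    (hB : ∀ N ∈ Finset.Icc 1 N₀, ∀ j < m N, 0 < empMeas n X ω (ind (A N j)))
    (Λ Λ' : ℝ)
    (hΛ : ∀ N ≤ N₀, ∀ f ∈ F,
      |Real.sqrt n * (rakedMeas (fun N j => empMeas (nY N) (Y N) ω (ind (A N j)))
          m A n X ω N f - ∫ x, f x ∂P)| ≤ Λ ∧
      |Real.sqrt n * (rakedMeas (fun N j => (P (A N j)).toReal)
          m A n X ω N f - ∫ x, f x ∂P)| ≤ Λ)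
    (hΛ' : ∀ N ∈ Finset.Icc 1 N₀, ∀ j < m N,
      |Real.sqrt (nY N) * (empMeas (nY N) (Y N) ω (ind (A N j)) - (P (A N j)).toReal)| ≤ Λ')
    (hΛp : Λ < p1 * Real.sqrt n) :
    ∀ f ∈ F,
      |Real.sqrt n * (rakedMeas (fun N j => empMeas (nY N) (Y N) ω (ind (A N j)))
            m A n X ω 1 f - ∫ x, f x ∂P)
        - Real.sqrt n * (rakedMeas (fun N j => (P (A N j)).toReal)
            m A n X ω 1 f - ∫ x, f x ∂P)|
      ≤ (m 1 : ℝ) * max 1 MF * Λ' / (p1 - Λ / Real.sqrt n)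
          * Real.sqrt ((n : ℝ) / (nY 1 : ℝ)) * (1 + Λ / Real.sqrt n) := by
  intro f hf
  obtain ⟨⟨j₀, hj₀, hp1eq⟩, hp1lb⟩ := hp1
  have h1N : (1:ℕ) ∈ Finset.Icc 1 N₀ := Finset.mem_Icc.mpr ⟨le_refl 1, hN₀⟩
  have hn' : (0:ℝ) < n := by exact_mod_cast hn
  have hs : (0:ℝ) < Real.sqrt n := Real.sqrt_pos.mpr hn'
  have hn1' : (0:ℝ) < (nY 1 : ℝ) := by exact_mod_cast hnY 1 h1N
  have hs1 : (0:ℝ) < Real.sqrt (nY 1) := Real.sqrt_pos.mpr hn1'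
  set s := Real.sqrt n with hsdef
  set K := max 1 MF with hKdef
  have hK1 : (1:ℝ) ≤ K := le_max_left _ _
  have hΛnn : 0 ≤ Λ :=
    le_trans (abs_nonneg _) ((hΛ 0 (Nat.zero_le _) _ (hFind 1 h1N j₀ hj₀)).1)
  have hΛ'nn : 0 ≤ Λ' := le_trans (abs_nonneg _) (hΛ' 1 h1N j₀ hj₀)
  have hd : 0 < p1 - Λ / s := by
    rw [sub_pos, div_lt_iff₀ hs]; exact hΛp
  set e : ℕ → ℝ := fun j => empMeas n X ω (ind (A 1 j)) with he
  set w : ℕ → ℝ := fun j => empMeas (nY 1) (Y 1) ω (ind (A 1 j)) with hw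
  set g : ℕ → ℝ := fun j => empMeas n X ω (fun x => f x * ind (A 1 j) x) with hg
  set p : ℕ → ℝ := fun j => (P (A 1 j)).toReal with hp
  have hint : ∀ j < m 1, ∫ x, ind (A 1 j) x ∂P = p j := by
    intro j hj
    exact MeasureTheory.integral_indicator_one (hmeas 1 h1N j hj)
  -- lower bound on e j
  have hde : ∀ j < m 1, p1 - Λ / s ≤ e j := by
    intro j hj
    have h0 := (hΛ 0 (Nat.zero_le _) _ (hFind 1 h1N j hj)).2
    rw [show rakedMeas (fun N j => (P (A N j)).toReal) m A n X ω 0 = empMeas n X ω from rfl,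
      hint j hj] at h0
    have h1 := (abs_le.mp h0).1
    have h2 : (p j - e j) * s ≤ Λ := by nlinarith
    have h3 : p j - e j ≤ Λ / s := (le_div_iff₀ hs).mpr h2
    have h4 : p1 ≤ p j := hp1lb ⟨j, hj, rfl⟩
    linarith
  have hdepos : ∀ j < m 1, 0 < e j := fun j hj => lt_of_lt_of_le hd (hde j hj)
  -- bound on |w j - p j|
  have hwp : ∀ j < m 1, |w j - p j| ≤ Λ' / Real.sqrt (nY 1) := by
    intro j hj
    have h0 := hΛ' 1 h1N j hj
    rw [abs_mul, abs_of_pos hs1] at h0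
    exact (le_div_iff₀' hs1).mpr h0
  -- bound on |g j|
  have hgb : ∀ j < m 1, |g j| ≤ K * (1 + Λ / s) := by
    intro j hj
    have h0 := (hΛ 0 (Nat.zero_le _) _ (hFstable f hf 1 h1N j hj)).2
    rw [show rakedMeas (fun N j => (P (A N j)).toReal) m A n X ω 0 = empMeas n X ω from rfl] at h0
    set I := ∫ x, f x * ind (A 1 j) x ∂P with hI
    have hIb : |I| ≤ K := by
      have hb : ∀ᵐ x ∂P, ‖f x * ind (A 1 j) x‖ ≤ K := by
        refine Filter.Eventually.of_forall fun x => ?_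
        by_cases hx : x ∈ A 1 j
        · simp only [ind, Set.indicator_of_mem hx, Pi.one_apply, mul_one, Real.norm_eq_abs]
          exact le_trans (hMF f hf x) (le_max_right _ _)
        · simp only [ind, Set.indicator_of_notMem hx, mul_zero, norm_zero]
          linarith
      have := MeasureTheory.norm_integral_le_of_norm_le_const hb
      simpa [Real.norm_eq_abs] using this
    rw [abs_mul, abs_of_pos hs] at h0
    have h1 : |g j - I| ≤ Λ / s := (le_div_iff₀' hs).mpr h0
    have h2 : |g j| ≤ |I| + |g j - I| := by
      calc |g j| = |I + (g j - I)| := by congr 1; ring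
        _ ≤ |I| + |g j - I| := abs_add_le _ _
    have hΛs : 0 ≤ Λ / s := div_nonneg hΛnn hs.le
    nlinarith
  -- rewrite the difference as a sum
  have hexp : Real.sqrt n * (rakedMeas (fun N j => empMeas (nY N) (Y N) ω (ind (A N j)))
            m A n X ω 1 f - ∫ x, f x ∂P)
        - Real.sqrt n * (rakedMeas (fun N j => (P (A N j)).toReal)
            m A n X ω 1 f - ∫ x, f x ∂P)
      = s * ∑ j ∈ Finset.range (m 1), (w j - p j) / e j * g j := by
    have h1 : rakedMeas (fun N j => empMeas (nY N) (Y N) ω (ind (A N j))) m A n X ω 1 f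
        = ∑ j ∈ Finset.range (m 1), w j / e j * g j := rfl
    have h2 : rakedMeas (fun N j => (P (A N j)).toReal) m A n X ω 1 f
        = ∑ j ∈ Finset.range (m 1), p j / e j * g j := rfl
    rw [hsdef, h1, h2]
    rw [show (∑ j ∈ Finset.range (m 1), (w j - p j) / e j * g j)
        = ∑ j ∈ Finset.range (m 1), w j / e j * g j
          - ∑ j ∈ Finset.range (m 1), p j / e j * g j from by
      rw [← Finset.sum_sub_distrib]
      exact Finset.sum_congr rfl fun j _ => by rw [sub_div]; ring]
    ring
  rw [hexp]
  set B := Λ' / Real.sqrt (nY 1) / (p1 - Λ / s) * (K * (1 + Λ / s)) with hBdef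
  have hterm : ∀ j ∈ Finset.range (m 1), |(w j - p j) / e j * g j| ≤ B := by
    intro j hj
    rw [Finset.mem_range] at hj
    rw [abs_mul, abs_div, abs_of_pos (hdepos j hj)]
    refine mul_le_mul ?_ (hgb j hj) (abs_nonneg _) ?_
    · exact div_le_div₀ (div_nonneg hΛ'nn hs1.le) (hwp j hj) hd (hde j hj)
    · positivity
  have hsum : |∑ j ∈ Finset.range (m 1), (w j - p j) / e j * g j| ≤ (m 1 : ℝ) * B := by
    calc |∑ j ∈ Finset.range (m 1), (w j - p j) / e j * g j|
        ≤ ∑ j ∈ Finset.range (m 1), |(w j - p j) / e j * g j| :=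
          Finset.abs_sum_le_sum_abs _ _
      _ ≤ (Finset.range (m 1)).card • B := Finset.sum_le_card_nsmul _ _ _ hterm
      _ = (m 1 : ℝ) * B := by simp [nsmul_eq_mul]
  have hBnn : 0 ≤ B := by
    have hΛs : 0 ≤ Λ / s := div_nonneg hΛnn hs.le
    have h1 : 0 ≤ Λ' / Real.sqrt (nY 1) / (p1 - Λ / s) :=
      div_nonneg (div_nonneg hΛ'nn hs1.le) hd.le
    have h2 : (0:ℝ) ≤ K * (1 + Λ / s) := mul_nonneg (by linarith) (by linarith)
    exact mul_nonneg h1 h2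
  have hfin : |s * ∑ j ∈ Finset.range (m 1), (w j - p j) / e j * g j|
      ≤ s * ((m 1 : ℝ) * B) := by
    rw [abs_mul, abs_of_pos hs]
    exact mul_le_mul_of_nonneg_left hsum hs.le
  refine le_trans hfin (le_of_eq ?_)
  have hsq : Real.sqrt ((n : ℝ) / (nY 1 : ℝ)) = s / Real.sqrt (nY 1) :=
    Real.sqrt_div hn'.le _
  rw [hsq, hBdef]
  field_simp [hd.ne', hs1.ne', hs.ne']
end

section
/- Let Λ_n = max( sup_{0≤N≤N₀} ‖α̃_n^(N)‖_F , sup_{0≤N≤N₀} ‖α_n^(N)‖_F ) and Λ'_n = max_{1≤N≤N₀} max_{1≤j≤m_N} |√(n_N)·(ℙ'_N(A_j^(N)) − P(A_j^(N)))|. On the event B_{n,N₀} ∩ {Λ_n < p_(N₀)·√n}, for every 1 ≤ N ≤ N₀ one has ‖α̃_n^(N) − α_n^(N)‖_F ≤ N·C_{n,N}^N·( Λ_n²/√n + Λ'_n·(Λ_n + √n)/√(n_(N)) ), where C_{n,N} = 4·m_(N)·K_F/(p_(N) − Λ_n/√n)², m_(N) = max_{1≤M≤N} m_M, p_(N) =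 min_{1≤M≤N} min_{1≤j≤m_M} P(A_j^(M)), and n_(N) = min_{1≤M≤N} n_M. -/
/-! Write `Q_M`, `R_M` for the learned and the ordinary raked measures, `ε = Λ/√n`,
`δ = p_(N) - ε` and `η = Λ'/√n_(N)`. On the event considered every denominator
`Q_M(1_A)`, `R_M(1_A)` is at least `δ > 0`, and comparing one raking step cell by cell gives
`|Q_{M+1} f - R_{M+1} f| ≤ (3K/δ²) sup_F |Q_M - R_M| + m_(N) (K + ε) η / δ`.
Since `Q_0 = R_0 = ℙ_n`, this linear recursion, whose coefficients are bounded in terms of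
`C = 4 m_(N) K/δ²`, yields `|Q_M f - R_M f| ≤ M C^M (ε² + (1 + ε) η)` for `M ≤ N`;
multiplying by `√n` gives the claim. -/

open MeasureTheory ProbabilityTheory

lemma abs_le_div_of_abs_mul_le {s x c : ℝ} (hs : 0 < s) (h : |s * x| ≤ c) : |x| ≤ c / s := by
  rw [le_div_iff₀ hs, mul_comm]
  rwa [abs_mul, abs_of_pos hs] at h

lemma abs_le_div_sqrt_of_abs_sqrt_mul_le {a b x c : ℝ} (ha : 0 < a) (hab : a ≤ b)
    (h : |Real.sqrt b * x| ≤ c) : |x| ≤ c / Real.sqrt a :=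
  (abs_le_div_of_abs_mul_le ((Real.sqrt_pos.2 ha).trans_le (Real.sqrt_le_sqrt hab)) h).trans
    (div_le_div_of_nonneg_left ((abs_nonneg _).trans h) (Real.sqrt_pos.2 ha)
      (Real.sqrt_le_sqrt hab))

lemma abs_div_mul_sub_div_mul_le {a b c d w p α δ K Δ η : ℝ} (hδ : 0 < δ) (hδ1 : δ ≤ 1)
    (hb : δ ≤ b) (hd : δ ≤ d) (hK : 1 ≤ K) (ha : |a| ≤ α) (hc : |c| ≤ 2 * K)
    (hac : |a - c| ≤ Δ) (hbd : |b - d| ≤ Δ) (hw : |w - p| ≤ η) (hp : 0 ≤ p) :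
    |w / b * a - p / d * c| ≤ α * η / δ + p * (3 * K / δ ^ 2 * Δ) := by
  have hb0 : 0 < b := hδ.trans_le hb
  have hd0 : 0 < d := hδ.trans_le hd
  have hΔ : 0 ≤ Δ := (abs_nonneg _).trans hac
  have split : w / b * a - p / d * c =
      (w - p) * (a / b) + p * ((a - c) / b + c * (d - b) / (b * d)) := by
    field_simp
    ring
  have weight : |(w - p) * (a / b)| ≤ α * η / δ := by
    rw [abs_mul, abs_div, abs_of_pos hb0, mul_comm, mul_div_right_comm]
    exact mul_le_mul (div_le_div₀ ((abs_nonneg _).trans ha) ha hδ hb) hw (abs_nonneg _)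
      (div_nonneg ((abs_nonneg _).trans ha) hδ.le)
  have numerator : |(a - c) / b| ≤ K * Δ / δ ^ 2 := by
    rw [abs_div, abs_of_pos hb0]
    calc |a - c| / b ≤ Δ / δ := div_le_div₀ hΔ hac hδ hb
      _ ≤ K * Δ / δ ^ 2 := by
        rw [div_le_div_iff₀ hδ (by positivity)]
        nlinarith [mul_nonneg hΔ hδ.le, mul_nonneg (mul_nonneg hΔ hδ.le) (sub_nonneg.2 hδ1)]
  have denominator : |c * (d - b) / (b * d)| ≤ 2 * K * Δ / δ ^ 2 := by
    rw [abs_div, abs_mul, abs_of_pos (mul_pos hb0 hd0), abs_sub_comm]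
    exact div_le_div₀ (by positivity) (mul_le_mul hc hbd (abs_nonneg _) (by linarith))
      (by positivity) (by nlinarith)
  rw [split]
  refine (abs_add_le _ _).trans (add_le_add weight ?_)
  rw [abs_mul, abs_of_nonneg hp]
  refine mul_le_mul_of_nonneg_left ((abs_add_le _ _).trans ?_) hp
  linarith [show 3 * K / δ ^ 2 * Δ = K * Δ / δ ^ 2 + 2 * K * Δ / δ ^ 2 by ring]

lemma mul_nat_mul_pow_mul_add_le {a b C B : ℝ} (M : ℕ) (ha : a ≤ C)
    (hb : b ≤ C * B) (hC : 1 ≤ C) (hB : 0 ≤ B) :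
    a * (M * C ^ M * B) + b ≤ (M + 1 : ℕ) * C ^ (M + 1) * B := by
  have hCM : C ≤ C ^ (M + 1) := le_self_pow₀ hC M.succ_ne_zero
  have hX : 0 ≤ M * C ^ M * B := by positivity
  calc a * (M * C ^ M * B) + b ≤ C * (M * C ^ M * B) + C ^ (M + 1) * B :=
        add_le_add (mul_le_mul_of_nonneg_right ha hX) (hb.trans (by gcongr))
    _ = _ := by push_cast; ring

lemma mul_div_le_four_mul_div_sq_mul {m m' K ε δ η : ℝ} (hm0 : 0 ≤ m) (hm : m ≤ m')
    (hK : 1 ≤ K) (hε : 0 ≤ ε) (hδ : 0 < δ) (hδ1 : δ ≤ 1) (hη : 0 ≤ η) :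
    m * ((K + ε) * η / δ) ≤ 4 * m' * K / δ ^ 2 * (ε ^ 2 + (1 + ε) * η) := by
  have hm' : 0 ≤ m' := hm0.trans hm
  have hKε : (K + ε) * η ≤ K * (1 + ε) * η := mul_le_mul_of_nonneg_right (by nlinarith) hη
  calc m * ((K + ε) * η / δ) ≤ m' * (K * (1 + ε) * η / δ ^ 2) :=
        mul_le_mul hm (div_le_div₀ (by positivity) hKε (by positivity) (by nlinarith))
          (by positivity) hm'
    _ = m' * K * ((1 + ε) * η) / δ ^ 2 := by ring
    _ ≤ 4 * m' * K * (ε ^ 2 + (1 + ε) * η) / δ ^ 2 := by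
        have := sq_nonneg ε
        gcongr <;> nlinarith [mul_nonneg hm' (zero_le_one.trans hK)]
    _ = 4 * m' * K / δ ^ 2 * (ε ^ 2 + (1 + ε) * η) := by ring

section Raking

variable {𝒳 : Type*} [MeasurableSpace 𝒳] (P : Measure 𝒳) [IsProbabilityMeasure P]

lemma abs_integral_le_of_forall_abs_le {g : 𝒳 → ℝ} {K : ℝ} (hg : ∀ x, |g x| ≤ K) :
    |∫ x, g x ∂P| ≤ K := by
  simpa using norm_integral_le_of_norm_le_const (μ := P) (C := K) (f := g)
    (Filter.Eventually.of_forall fun x => by simpa using hg x)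

lemma sum_measureReal_le_one {m : ℕ} {A : ℕ → Set 𝒳} (hA : ∀ j < m, MeasurableSet (A j))
    (hdisj : ∀ j < m, ∀ k < m, j ≠ k → Disjoint (A j) (A k)) :
    ∑ j ∈ Finset.range m, P.real (A j) ≤ 1 := by
  refine (sum_measureReal_le_measureReal_univ (fun j hj => hA j (Finset.mem_range.1 hj))
    fun j hj k hk => hdisj j (Finset.mem_range.1 hj) k (Finset.mem_range.1 hk)).trans ?_
  simp

variable {F : Set (𝒳 → ℝ)} {K ε δ : ℝ}

lemma abs_rakeStep_sub_rakeStep_le {m : ℕ} {A : ℕ → Set 𝒳} {w : ℕ → ℝ}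
    {μ ν : (𝒳 → ℝ) → ℝ} {f : 𝒳 → ℝ} {Δ η : ℝ}
    (hA : ∀ j < m, MeasurableSet (A j))
    (hdisj : ∀ j < m, ∀ k < m, j ≠ k → Disjoint (A j) (A k))
    (hind : ∀ j < m, ind (A j) ∈ F) (hf : ∀ j < m, (fun x => f x * ind (A j) x) ∈ F)
    (hK : ∀ g ∈ F, ∀ x, |g x| ≤ K) (hK1 : 1 ≤ K)
    (hμ : ∀ g ∈ F, |μ g - ∫ x, g x ∂P| ≤ ε) (hν : ∀ g ∈ F, |ν g - ∫ x, g x ∂P| ≤ ε)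
    (hμν : ∀ g ∈ F, |μ g - ν g| ≤ Δ) (hΔ : 0 ≤ Δ)
    (hε : 0 ≤ ε) (hδ : 0 < δ) (hδA : ∀ j < m, δ + ε ≤ P.real (A j))
    (hw : ∀ j < m, |w j - P.real (A j)| ≤ η) :
    |rakeStep m A w μ f - rakeStep m A (fun j => P.real (A j)) ν f| ≤
      3 * K / δ ^ 2 * Δ + m * ((K + ε) * η / δ) := by
  have cell : ∀ j ∈ Finset.range m,
      |w j / μ (ind (A j)) * μ (fun x => f x * ind (A j) x) -
          P.real (A j) / ν (ind (A j)) * ν (fun x => f x * ind (A j) x)| ≤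
        (K + ε) * η / δ + P.real (A j) * (3 * K / δ ^ 2 * Δ) := by
    intro j hj
    rw [Finset.mem_range] at hj
    have hint : ∫ x, ind (A j) x ∂P = P.real (A j) := integral_indicator_one (hA j hj)
    have hp1 : P.real (A j) ≤ 1 := measureReal_le_one
    have hb := abs_le.1 (hμ _ (hind j hj))
    have hd := abs_le.1 (hν _ (hind j hj))
    have hfint := abs_le.1 (abs_integral_le_of_forall_abs_le P (hK _ (hf j hj)))
    have ha := abs_le.1 (hμ _ (hf j hj))
    have hc := abs_le.1 (hν _ (hf j hj))
    rw [hint] at hb hd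
    have hδA := hδA j hj
    exact abs_div_mul_sub_div_mul_le hδ (by linarith) (by linarith) (by linarith) hK1
      (abs_le.2 ⟨by linarith, by linarith⟩) (abs_le.2 ⟨by linarith, by linarith⟩)
      (hμν _ (hf j hj)) (hμν _ (hind j hj)) (hw j hj) measureReal_nonneg
  have hsum := sum_measureReal_le_one P hA hdisj
  calc _ ≤ ∑ j ∈ Finset.range m, ((K + ε) * η / δ + P.real (A j) * (3 * K / δ ^ 2 * Δ)) := by
        unfold rakeStep
        rw [← Finset.sum_sub_distrib]
        exact (Finset.abs_sum_le_sum_abs _ _).trans (Finset.sum_le_sum cell)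
    _ ≤ _ := by
        rw [Finset.sum_add_distrib, Finset.sum_const, Finset.card_range, nsmul_eq_mul,
          ← Finset.sum_mul]
        nlinarith [show 0 ≤ 3 * K / δ ^ 2 * Δ by positivity]

theorem abs_rakedMeas_sub_rakedMeas_le {Ω : Type*} {w : ℕ → ℕ → ℝ} {m : ℕ → ℕ}
    {A : ℕ → ℕ → Set 𝒳} {n : ℕ} {X : ℕ → Ω → 𝒳} {ω : Ω} {N : ℕ} {η C B : ℝ}
    (hA : ∀ M ∈ Finset.Icc 1 N, ∀ j < m M, MeasurableSet (A M j))
    (hdisj : ∀ M ∈ Finset.Icc 1 N, ∀ j < m M, ∀ k < m M, j ≠ k → Disjoint (A M j) (A M k))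
    (hind : ∀ M ∈ Finset.Icc 1 N, ∀ j < m M, ind (A M j) ∈ F)
    (hstable : ∀ f ∈ F, ∀ M ∈ Finset.Icc 1 N, ∀ j < m M,
      (fun x => f x * ind (A M j) x) ∈ F)
    (hK : ∀ g ∈ F, ∀ x, |g x| ≤ K) (hK1 : 1 ≤ K)
    (hQ : ∀ M ≤ N, ∀ g ∈ F, |rakedMeas w m A n X ω M g - ∫ x, g x ∂P| ≤ ε)
    (hR : ∀ M ≤ N, ∀ g ∈ F,
      |rakedMeas (fun M j => P.real (A M j)) m A n X ω M g - ∫ x, g x ∂P| ≤ ε)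
    (hε : 0 ≤ ε) (hδ : 0 < δ)
    (hδA : ∀ M ∈ Finset.Icc 1 N, ∀ j < m M, δ + ε ≤ P.real (A M j))
    (hw : ∀ M ∈ Finset.Icc 1 N, ∀ j < m M, |w M j - P.real (A M j)| ≤ η)
    (hC : 3 * K / δ ^ 2 ≤ C) (hC1 : 1 ≤ C) (hB : 0 ≤ B)
    (hmB : ∀ M ∈ Finset.Icc 1 N, m M * ((K + ε) * η / δ) ≤ C * B) :
    ∀ M ≤ N, ∀ f ∈ F, |rakedMeas w m A n X ω M f -
      rakedMeas (fun M j => P.real (A M j)) m A n X ω M f| ≤ M * C ^ M * B := by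
  intro M
  induction M with
  | zero => simp [rakedMeas]
  | succ M ih =>
    intro hM f hf
    have hMN : M + 1 ∈ Finset.Icc 1 N := Finset.mem_Icc.2 ⟨Nat.le_add_left 1 M, hM⟩
    exact (abs_rakeStep_sub_rakeStep_le P (hA _ hMN) (hdisj _ hMN) (hind _ hMN)
      (hstable f hf _ hMN) hK hK1 (hQ M (by omega)) (hR M (by omega)) (ih (by omega))
      (by positivity) hε hδ (hδA _ hMN) (hw _ hMN)).trans
      (mul_nat_mul_pow_mul_add_le M hC (hmB _ hMN) hC1 hB)

end Raking

theorem stmt_8_general {𝒳 Ω : Type*} [MeasurableSpace 𝒳]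
    (P : Measure 𝒳) [IsProbabilityMeasure P]
    (N₀ : ℕ) (m : ℕ → ℕ) (A : ℕ → ℕ → Set 𝒳)
    (hmeas : ∀ N ∈ Finset.Icc 1 N₀, ∀ j < m N, MeasurableSet (A N j))
    (hdisj : ∀ N ∈ Finset.Icc 1 N₀, ∀ j < m N, ∀ k < m N, j ≠ k → Disjoint (A N j) (A N k))
    (n : ℕ) (hn : 1 ≤ n) (X : ℕ → Ω → 𝒳)
    (nY : ℕ → ℕ) (hnY : ∀ N ∈ Finset.Icc 1 N₀, 1 ≤ nY N)
    (Y : ℕ → ℕ → Ω → 𝒳)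
    (F : Set (𝒳 → ℝ))
    (MF : ℝ) (hMF : ∀ f ∈ F, ∀ x, |f x| ≤ MF)
    (hFind : ∀ N ∈ Finset.Icc 1 N₀, ∀ j < m N, ind (A N j) ∈ F)
    (hFstable : ∀ f ∈ F, ∀ N ∈ Finset.Icc 1 N₀, ∀ j < m N,
      (fun x => f x * ind (A N j) x) ∈ F)
    (mbar pbar nbar : ℕ → ℝ)
    (hmbar : ∀ N ∈ Finset.Icc 1 N₀,
      IsGreatest {r : ℝ | ∃ M ∈ Finset.Icc 1 N, r = (m M : ℝ)} (mbar N))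
    (hpbar : ∀ N ∈ Finset.Icc 1 N₀,
      IsLeast {r : ℝ | ∃ M ∈ Finset.Icc 1 N, ∃ j < m M, r = (P (A M j)).toReal} (pbar N))
    (hnbar : ∀ N ∈ Finset.Icc 1 N₀,
      IsLeast {r : ℝ | ∃ M ∈ Finset.Icc 1 N, r = (nY M : ℝ)} (nbar N))
    (ω : Ω)
    (Λ Λ' : ℝ)
    (hΛ : ∀ N ≤ N₀, ∀ f ∈ F,
      |Real.sqrt n * (rakedMeas (fun N j => empMeas (nY N) (Y N) ω (ind (A N j)))
          m A n X ω N f - ∫ x, f x ∂P)| ≤ Λ ∧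
      |Real.sqrt n * (rakedMeas (fun N j => (P (A N j)).toReal)
          m A n X ω N f - ∫ x, f x ∂P)| ≤ Λ)
    (hΛ' : ∀ N ∈ Finset.Icc 1 N₀, ∀ j < m N,
      |Real.sqrt (nY N) * (empMeas (nY N) (Y N) ω (ind (A N j)) - (P (A N j)).toReal)| ≤ Λ')
    (hΛp : Λ < pbar N₀ * Real.sqrt n) :
    ∀ N ∈ Finset.Icc 1 N₀, ∀ f ∈ F,
      |Real.sqrt n * (rakedMeas (fun N j => empMeas (nY N) (Y N) ω (ind (A N j)))
            m A n X ω N f - ∫ x, f x ∂P)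
        - Real.sqrt n * (rakedMeas (fun N j => (P (A N j)).toReal)
            m A n X ω N f - ∫ x, f x ∂P)|
      ≤ (N : ℝ) * (4 * mbar N * max 1 MF / (pbar N - Λ / Real.sqrt n) ^ 2) ^ N
          * (Λ ^ 2 / Real.sqrt n + Λ' * (Λ + Real.sqrt n) / Real.sqrt (nbar N)) := by
  intro N hN f hf
  obtain ⟨hN1, hNN₀⟩ := Finset.mem_Icc.1 hN
  have hsub : Finset.Icc 1 N ⊆ Finset.Icc 1 N₀ := Finset.Icc_subset_Icc le_rfl hNN₀
  have hs : 0 < Real.sqrt n := Real.sqrt_pos.2 (by exact_mod_cast hn)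
  set ε := Λ / Real.sqrt n
  set K := max 1 MF
  set δ := pbar N - ε
  set η := Λ' / Real.sqrt (nbar N)
  -- `m_(N)`, `p_(N)`, `n_(N)` are running extrema, so they control every stage `M ≤ N` at once.
  have hpN : ∀ M ∈ Finset.Icc 1 N, ∀ j < m M, pbar N ≤ P.real (A M j) :=
    fun M hM j hj => (hpbar N hN).2 ⟨M, hM, j, hj, rfl⟩
  have hm : ∀ M ∈ Finset.Icc 1 N, (m M : ℝ) ≤ mbar N :=
    fun M hM => (hmbar N hN).2 ⟨M, hM, rfl⟩
  have hnbar0 : 0 < nbar N := by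
    obtain ⟨M, hM, hr⟩ := (hnbar N hN).1
    exact hr ▸ by exact_mod_cast hnY M (hsub hM)
  have hε : 0 ≤ ε := div_nonneg ((abs_nonneg _).trans (hΛ 0 (Nat.zero_le _) f hf).1) hs.le
  have hδ : 0 < δ := by
    have hp : pbar N₀ ≤ pbar N :=
      (hpbar N hN).mono (hpbar N₀ (Finset.right_mem_Icc.2 (hN1.trans hNN₀)))
        fun r ⟨M, hM, j, hj, hr⟩ => ⟨M, hsub hM, j, hj, hr⟩
    linarith [(div_lt_iff₀ hs).2 hΛp]
  obtain ⟨M₀, hM₀, j₀, hj₀, -⟩ := (hpbar N hN).1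
  have hδ1 : δ ≤ 1 := by linarith [(hpN M₀ hM₀ j₀ hj₀).trans measureReal_le_one]
  have hm1 : 1 ≤ mbar N := (hm M₀ hM₀).trans' (by exact_mod_cast j₀.zero_le.trans_lt hj₀)
  have hη : 0 ≤ η :=
    div_nonneg ((abs_nonneg _).trans (hΛ' M₀ (hsub hM₀) j₀ hj₀)) (Real.sqrt_nonneg _)
  have hK1 : 1 ≤ K := le_max_left _ _
  have key := abs_rakedMeas_sub_rakedMeas_le P (fun M hM => hmeas M (hsub hM))
    (fun M hM => hdisj M (hsub hM)) (fun M hM => hFind M (hsub hM))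
    (fun g hg M hM => hFstable g hg M (hsub hM))
    (fun g hg x => (hMF g hg x).trans (le_max_right _ _)) hK1
    (fun M hM g hg => abs_le_div_of_abs_mul_le hs (hΛ M (hM.trans hNN₀) g hg).1)
    (fun M hM g hg => abs_le_div_of_abs_mul_le hs (hΛ M (hM.trans hNN₀) g hg).2)
    hε hδ (fun M hM j hj => by linarith [hpN M hM j hj])
    (fun M hM j hj => abs_le_div_sqrt_of_abs_sqrt_mul_le hnbar0
      ((hnbar N hN).2 ⟨M, hM, rfl⟩) (hΛ' M (hsub hM) j hj))
    (C := 4 * mbar N * K / δ ^ 2) (B := ε ^ 2 + (1 + ε) * η)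
    (by gcongr; linarith) (by rw [le_div_iff₀ (by positivity)]; nlinarith) (by positivity)
    (fun M hM => mul_div_le_four_mul_div_sq_mul (Nat.cast_nonneg _) (hm M hM) hK1 hε hδ hδ1 hη)
    N le_rfl f hf
  rw [← mul_sub, sub_sub_sub_cancel_right, abs_mul, abs_of_pos hs]
  calc Real.sqrt n * |_|
      ≤ Real.sqrt n * (N * (4 * mbar N * K / δ ^ 2) ^ N * (ε ^ 2 + (1 + ε) * η)) :=
        mul_le_mul_of_nonneg_left key hs.le
    _ = _ := by
        simp only [ε, η]
        field_simp
        ring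

/-- On the event `B_{n,N₀} ∩ {Λ_n < p_{(N₀)}√n}`, for every `1 ≤ N ≤ N₀`,
`‖α̃_n^{(N)} − α_n^{(N)}‖_F ≤ N·C_{n,N}^N·(Λ_n²/√n + Λ'_n(Λ_n + √n)/√(n_{(N)}))`
with `C_{n,N} = 4 m_{(N)} K_F/(p_{(N)} − Λ_n/√n)²`. -/
theorem stmt_8 {𝒳 Ω : Type*} [MeasurableSpace 𝒳] [MeasurableSpace Ω]
    (P : Measure 𝒳) [IsProbabilityMeasure P]
    (Pr : Measure Ω) [IsProbabilityMeasure Pr]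
    (N₀ : ℕ) (hN₀ : 1 ≤ N₀) (m : ℕ → ℕ) (A : ℕ → ℕ → Set 𝒳)
    (hmeas : ∀ N ∈ Finset.Icc 1 N₀, ∀ j < m N, MeasurableSet (A N j))
    (hdisj : ∀ N ∈ Finset.Icc 1 N₀, ∀ j < m N, ∀ k < m N, j ≠ k → Disjoint (A N j) (A N k))
    (hcover : ∀ N ∈ Finset.Icc 1 N₀, ⋃ j ∈ Finset.range (m N), A N j = Set.univ)
    (hppos : ∀ N ∈ Finset.Icc 1 N₀, ∀ j < m N, 0 < P (A N j))
    (n : ℕ) (hn : 1 ≤ n) (X : ℕ → Ω → 𝒳)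
    (hXmeas : ∀ i, Measurable (X i))
    (hXindep : iIndepFun (fun i : Fin n => X i) Pr)
    (hXlaw : ∀ i : Fin n, Measure.map (X i) Pr = P)
    (nY : ℕ → ℕ) (hnY : ∀ N ∈ Finset.Icc 1 N₀, 1 ≤ nY N)
    (Y : ℕ → ℕ → Ω → 𝒳) (hYmeas : ∀ N i, Measurable (Y N i))
    (hYindep : ∀ N ∈ Finset.Icc 1 N₀,
      iIndepFun (fun i : Fin (nY N) => Y N i) Pr)
    (hYlaw : ∀ N ∈ Finset.Icc 1 N₀, ∀ i < nY N, Measure.map (Y N i) Pr = P)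
    (F : Set (𝒳 → ℝ)) (hFcount : F.Countable) (hFmeas : ∀ f ∈ F, Measurable f)
    (MF : ℝ) (hMF : ∀ f ∈ F, ∀ x, |f x| ≤ MF)
    (hFind : ∀ N ∈ Finset.Icc 1 N₀, ∀ j < m N, ind (A N j) ∈ F)
    (hFstable : ∀ f ∈ F, ∀ N ∈ Finset.Icc 1 N₀, ∀ j < m N,
      (fun x => f x * ind (A N j) x) ∈ F)
    (mbar pbar nbar : ℕ → ℝ)
    (hmbar : ∀ N ∈ Finset.Icc 1 N₀,
      IsGreatest {r : ℝ | ∃ M ∈ Finset.Icc 1 N, r = (m M : ℝ)} (mbar N))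
    (hpbar : ∀ N ∈ Finset.Icc 1 N₀,
      IsLeast {r : ℝ | ∃ M ∈ Finset.Icc 1 N, ∃ j < m M, r = (P (A M j)).toReal} (pbar N))
    (hnbar : ∀ N ∈ Finset.Icc 1 N₀,
      IsLeast {r : ℝ | ∃ M ∈ Finset.Icc 1 N, r = (nY M : ℝ)} (nbar N))
    (ω : Ω)
    (hB : ∀ N ∈ Finset.Icc 1 N₀, ∀ j < m N, 0 < empMeas n X ω (ind (A N j)))
    (Λ Λ' : ℝ)
    (hΛ : ∀ N ≤ N₀, ∀ f ∈ F,
      |Real.sqrt n * (rakedMeas (fun N j => empMeas (nY N) (Y N) ω (ind (A N j)))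
          m A n X ω N f - ∫ x, f x ∂P)| ≤ Λ ∧
      |Real.sqrt n * (rakedMeas (fun N j => (P (A N j)).toReal)
          m A n X ω N f - ∫ x, f x ∂P)| ≤ Λ)
    (hΛ' : ∀ N ∈ Finset.Icc 1 N₀, ∀ j < m N,
      |Real.sqrt (nY N) * (empMeas (nY N) (Y N) ω (ind (A N j)) - (P (A N j)).toReal)| ≤ Λ')
    (hΛp : Λ < pbar N₀ * Real.sqrt n) :
    ∀ N ∈ Finset.Icc 1 N₀, ∀ f ∈ F,
      |Real.sqrt n * (rakedMeas (fun N j => empMeas (nY N) (Y N) ω (ind (A N j)))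
            m A n X ω N f - ∫ x, f x ∂P)
        - Real.sqrt n * (rakedMeas (fun N j => (P (A N j)).toReal)
            m A n X ω N f - ∫ x, f x ∂P)|
      ≤ (N : ℝ) * (4 * mbar N * max 1 MF / (pbar N - Λ / Real.sqrt n) ^ 2) ^ N
          * (Λ ^ 2 / Real.sqrt n + Λ' * (Λ + Real.sqrt n) / Real.sqrt (nbar N)) :=
  stmt_8_general P N₀ m A hmeas hdisj n hn X nY hnY Y F MF hMF hFind hFstable mbar pbar nbar hmbar
    hpbar hnbar ω Λ Λ' hΛ hΛ' hΛp
end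

section
/- Assume D := p_A·p_B·p_Ā·p_B̄ − (p_{AB} − p_A·p_B)² ≠ 0 and define C₁ = ( E[f|B]·(p_{AB} − p_A·p_B) − E[f|A]·p_A·p_B̄ − P(f)·(p_{AB} − p_A) ) / D and C₂ = ( E[f|A]·(p_{AB} − p_A·p_B) − E[f|B]·p_Ā·p_B − P(f)·(p_{AB} − p_B) ) / D. Then Var_P( f + p_B·C₁·1_A + p_A·C₂·1_B ) = Var_P(f) − p_A·p_B·( p_A·Δ_A² + p_B·Δ_B² − p_A·p_B·(Δ_A − Δ_B)² − 2·p_{AB}·Δ_A·Δ_B ) / D. (This is the asymptotic variance σ_f^(∞) of the stabilized raking-ratio Gaussian process for the two partitions {A,Aᶜ} and {B,Bᶜ}.) -/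
/-!
Put `g = f + a 1_A + b 1_B`. Its variance is a quadratic in `(a, b)`:
`Var f + 2 (a c₁ + b c₂) + (a, b) Σ (a, b)ᵀ`, where `c = (Cov(f, 1_A), Cov(f, 1_B)) = (p_A Δ_A, p_B Δ_B)`
and `Σ` is the covariance matrix of `(1_A, 1_B)`, with entries `p_A p_Ā`, `p_{AB} - p_A p_B`,
`p_B p_B̄` and determinant `D`. The coefficients `(p_B C₁, p_A C₂)` are the critical point
`-Σ⁻¹ c` of this quadratic, where its value is `Var f - cᵀ Σ⁻¹ c`.
-/

open MeasureTheory ProbabilityTheory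

namespace ProbabilityTheory

variable {Ω : Type*} [MeasurableSpace Ω] {μ : Measure Ω}

lemma variance_fun_add_const_mul_add_const_mul [IsFiniteMeasure μ] {X Y Z : Ω → ℝ}
    (hX : MemLp X 2 μ) (hY : MemLp Y 2 μ) (hZ : MemLp Z 2 μ) (a b : ℝ) :
    Var[fun ω ↦ X ω + a * Y ω + b * Z ω; μ]
      = Var[X; μ] + 2 * a * cov[X, Y; μ] + 2 * b * cov[X, Z; μ]
        + a ^ 2 * Var[Y; μ] + 2 * a * b * cov[Y, Z; μ] + b ^ 2 * Var[Z; μ] := by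
  have haY : MemLp (fun ω ↦ a * Y ω) 2 μ := hY.const_mul a
  have hbZ : MemLp (fun ω ↦ b * Z ω) 2 μ := hZ.const_mul b
  change Var[(X + fun ω ↦ a * Y ω) + fun ω ↦ b * Z ω; μ] = _
  rw [variance_add (hX.add haY) hbZ, variance_add hX haY,
    covariance_add_left hX haY hbZ, covariance_const_mul_left, covariance_const_mul_right,
    covariance_const_mul_right, covariance_const_mul_right, variance_const_mul,
    variance_const_mul]
  ring

lemma memLp_indicator_one [IsFiniteMeasure μ] {A : Set Ω} (hA : MeasurableSet A)
    (p : ENNReal) : MemLp (A.indicator (1 : Ω → ℝ)) p μ :=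
  memLp_indicator_const p hA 1 (Or.inr (measure_ne_top μ A))

variable [IsProbabilityMeasure μ]

lemma covariance_indicator_one_right {X : Ω → ℝ} (hX : MemLp X 2 μ) {A : Set Ω}
    (hA : MeasurableSet A) :
    cov[X, A.indicator 1; μ] = ∫ ω, X ω * A.indicator 1 ω ∂μ - μ[X] * μ.real A := by
  rw [covariance_eq_sub hX (memLp_indicator_one hA 2), integral_indicator_one hA]
  rfl

lemma covariance_indicator_one_right_eq_mul {X : Ω → ℝ} (hX : MemLp X 2 μ) {A : Set Ω}
    (hA : MeasurableSet A) (hA0 : μ A ≠ 0) :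
    cov[X, A.indicator 1; μ]
      = μ.real A * ((∫ ω, X ω * A.indicator 1 ω ∂μ) / μ.real A - μ[X]) := by
  have hA0' : μ.real A ≠ 0 := (measureReal_ne_zero_iff (measure_ne_top μ A)).2 hA0
  rw [covariance_indicator_one_right hX hA, mul_sub, mul_div_cancel₀ _ hA0', mul_comm]

lemma covariance_indicator_one_indicator_one {A B : Set Ω} (hA : MeasurableSet A)
    (hB : MeasurableSet B) :
    cov[A.indicator 1, B.indicator 1; μ] = μ.real (A ∩ B) - μ.real A * μ.real B := by
  rw [covariance_indicator_one_right (memLp_indicator_one hA 2) hB, integral_indicator_one hA,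
    ← integral_indicator_one (hA.inter hB), Set.inter_indicator_one]
  rfl

lemma variance_indicator_one {A : Set Ω} (hA : MeasurableSet A) :
    Var[A.indicator 1; μ] = μ.real A * μ.real Aᶜ := by
  rw [← covariance_self (memLp_indicator_one hA 2).aemeasurable,
    covariance_indicator_one_indicator_one hA hA, Set.inter_self, probReal_compl_eq_one_sub hA]
  ring

end ProbabilityTheory

/-- `(a, b) = -Σ⁻¹ c` for `Σ = !![s₁₁, s₁₂; s₁₂, s₂₂]`, and the value there is `V - cᵀ Σ⁻¹ c`. -/
lemma quadratic_at_critical_point_eq {V s₁₁ s₁₂ s₂₂ c₁ c₂ a b D : ℝ}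
    (hD : D = s₁₁ * s₂₂ - s₁₂ ^ 2) (hD0 : D ≠ 0)
    (ha : a = (s₁₂ * c₂ - s₂₂ * c₁) / D) (hb : b = (s₁₂ * c₁ - s₁₁ * c₂) / D) :
    V + 2 * a * c₁ + 2 * b * c₂ + a ^ 2 * s₁₁ + 2 * a * b * s₁₂ + b ^ 2 * s₂₂
      = V - (s₂₂ * c₁ ^ 2 - 2 * s₁₂ * c₁ * c₂ + s₁₁ * c₂ ^ 2) / D := by
  subst ha hb
  field_simp
  rw [hD]
  ring

theorem stmt_15_general {𝒳 : Type*} [MeasurableSpace 𝒳] (P : Measure 𝒳) [IsProbabilityMeasure P]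
    (f : 𝒳 → ℝ) (hf : Measurable f) (M : ℝ) (hfb : ∀ x, |f x| ≤ M)
    (A B : Set 𝒳) (hA : MeasurableSet A) (hB : MeasurableSet B)
    (hA0 : 0 < P A) (hB0 : 0 < P B)
    (pA pAbar pB pBbar pAB Pf EfA EfB ΔA ΔB D C₁ C₂ : ℝ)
    (hpA : pA = (P A).toReal) (hpAbar : pAbar = (P Aᶜ).toReal)
    (hpB : pB = (P B).toReal) (hpBbar : pBbar = (P Bᶜ).toReal)
    (hpAB : pAB = (P (A ∩ B)).toReal)
    (hPf : Pf = ∫ x, f x ∂P)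
    (hEfA : EfA = (∫ x, f x * A.indicator (1 : 𝒳 → ℝ) x ∂P) / pA)
    (hEfB : EfB = (∫ x, f x * B.indicator (1 : 𝒳 → ℝ) x ∂P) / pB)
    (hΔA : ΔA = EfA - Pf) (hΔB : ΔB = EfB - Pf)
    (hD : D = pA * pB * pAbar * pBbar - (pAB - pA * pB) ^ 2) (hD0 : D ≠ 0)
    (hC₁ : C₁ = (EfB * (pAB - pA * pB) - EfA * pA * pBbar - Pf * (pAB - pA)) / D)
    (hC₂ : C₂ = (EfA * (pAB - pA * pB) - EfB * pAbar * pB - Pf * (pAB - pB)) / D) :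
    (∫ x, (f x + pB * C₁ * A.indicator (1 : 𝒳 → ℝ) x
            + pA * C₂ * B.indicator (1 : 𝒳 → ℝ) x) ^ 2 ∂P)
        - (∫ x, (f x + pB * C₁ * A.indicator (1 : 𝒳 → ℝ) x
            + pA * C₂ * B.indicator (1 : 𝒳 → ℝ) x) ∂P) ^ 2
      = ((∫ x, f x ^ 2 ∂P) - (∫ x, f x ∂P) ^ 2)
        - pA * pB * (pA * ΔA ^ 2 + pB * ΔB ^ 2 - pA * pB * (ΔA - ΔB) ^ 2
            - 2 * pAB * ΔA * ΔB) / D := by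
  obtain rfl : pA = P.real A := hpA
  obtain rfl : pB = P.real B := hpB
  obtain rfl : pAbar = P.real Aᶜ := hpAbar
  obtain rfl : pBbar = P.real Bᶜ := hpBbar
  obtain rfl : pAB = P.real (A ∩ B) := hpAB
  have hfL : MemLp f 2 P :=
    MemLp.of_bound hf.aestronglyMeasurable M (ae_of_all P fun x ↦ (hfb x).trans_eq' rfl)
  have h1A : MemLp (A.indicator 1) 2 P := memLp_indicator_one hA 2
  have h1B : MemLp (B.indicator 1) 2 P := memLp_indicator_one hB 2
  have hVar {g : 𝒳 → ℝ} (hg : MemLp g 2 P) :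
      ∫ x, g x ^ 2 ∂P - (∫ x, g x ∂P) ^ 2 = Var[g; P] := (variance_eq_sub hg).symm
  rw [hVar (g := fun x ↦ f x + _ * A.indicator 1 x + _ * B.indicator 1 x)
      ((hfL.add (h1A.const_mul _)).add (h1B.const_mul _)), hVar hfL,
    variance_fun_add_const_mul_add_const_mul hfL h1A h1B,
    covariance_indicator_one_right_eq_mul hfL hA hA0.ne',
    covariance_indicator_one_right_eq_mul hfL hB hB0.ne', ← hEfA, ← hEfB, ← hPf, ← hΔA, ← hΔB,
    variance_indicator_one hA, variance_indicator_one hB,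
    covariance_indicator_one_indicator_one hA hB]
  have hAbar := probReal_compl_eq_one_sub (μ := P) hA
  have hBbar := probReal_compl_eq_one_sub (μ := P) hB
  convert quadratic_at_critical_point_eq (V := Var[f; P]) (s₁₁ := P.real A * P.real Aᶜ)
    (s₁₂ := P.real (A ∩ B) - P.real A * P.real B) (s₂₂ := P.real B * P.real Bᶜ)
    (c₁ := P.real A * ΔA) (c₂ := P.real B * ΔB) (hD.trans (by ring)) hD0 ?_ ?_ using 3
  · rw [hAbar, hBbar]; ring
  · rw [hC₁, hΔA, hΔB, mul_div_assoc', hBbar]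
    ring
  · rw [hC₂, hΔA, hΔB, mul_div_assoc', hAbar]
    ring

/-- Asymptotic variance `σ_f^(∞)` of the stabilized raking-ratio Gaussian process for the
two partitions `{A, Aᶜ}` and `{B, Bᶜ}`:
`Var_P(f + p_B·C₁·1_A + p_A·C₂·1_B)
  = Var_P(f) − p_A p_B (p_A Δ_A² + p_B Δ_B² − p_A p_B (Δ_A − Δ_B)² − 2 p_{AB} Δ_A Δ_B)/D`. -/
theorem stmt_15 {𝒳 : Type*} [MeasurableSpace 𝒳] (P : Measure 𝒳) [IsProbabilityMeasure P]
    (f : 𝒳 → ℝ) (hf : Measurable f) (M : ℝ) (hfb : ∀ x, |f x| ≤ M)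
    (A B : Set 𝒳) (hA : MeasurableSet A) (hB : MeasurableSet B)
    (hA0 : 0 < P A) (hA1 : P A < 1) (hB0 : 0 < P B) (hB1 : P B < 1)
    (pA pAbar pB pBbar pAB Pf EfA EfB ΔA ΔB D C₁ C₂ : ℝ)
    (hpA : pA = (P A).toReal) (hpAbar : pAbar = (P Aᶜ).toReal)
    (hpB : pB = (P B).toReal) (hpBbar : pBbar = (P Bᶜ).toReal)
    (hpAB : pAB = (P (A ∩ B)).toReal)
    (hPf : Pf = ∫ x, f x ∂P)
    (hEfA : EfA = (∫ x, f x * A.indicator (1 : 𝒳 → ℝ) x ∂P) / pA)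
    (hEfB : EfB = (∫ x, f x * B.indicator (1 : 𝒳 → ℝ) x ∂P) / pB)
    (hΔA : ΔA = EfA - Pf) (hΔB : ΔB = EfB - Pf)
    (hD : D = pA * pB * pAbar * pBbar - (pAB - pA * pB) ^ 2) (hD0 : D ≠ 0)
    (hC₁ : C₁ = (EfB * (pAB - pA * pB) - EfA * pA * pBbar - Pf * (pAB - pA)) / D)
    (hC₂ : C₂ = (EfA * (pAB - pA * pB) - EfB * pAbar * pB - Pf * (pAB - pB)) / D) :
    (∫ x, (f x + pB * C₁ * A.indicator (1 : 𝒳 → ℝ) x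
            + pA * C₂ * B.indicator (1 : 𝒳 → ℝ) x) ^ 2 ∂P)
        - (∫ x, (f x + pB * C₁ * A.indicator (1 : 𝒳 → ℝ) x
            + pA * C₂ * B.indicator (1 : 𝒳 → ℝ) x) ∂P) ^ 2
      = ((∫ x, f x ^ 2 ∂P) - (∫ x, f x ∂P) ^ 2)
        - pA * pB * (pA * ΔA ^ 2 + pB * ΔB ^ 2 - pA * pB * (ΔA - ΔB) ^ 2
            - 2 * pAB * ΔA * ΔB) / D :=
  stmt_15_general P f hf M hfb A B hA hB hA0 hB0 pA pAbar pB pBbar pAB Pf EfA EfB ΔA ΔB D C₁ C₂ hpA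
    hpAbar hpB hpBbar hpAB hPf hEfA hEfB hΔA hΔB hD hD0 hC₁ hC₂
end

section
/- Let M₁ be the 2×2 real matrix with rows (p_{AB}/p_B, 1 − p_{AB}/p_B) and ((p_A − p_{AB})/p_B̄, 1 − (p_A − p_{AB})/p_B̄), and M₂ the 2×2 real matrix with rows (p_{AB}/p_A, 1 − p_{AB}/p_A) and ((p_B − p_{AB})/p_Ā, 1 − (p_B − p_{AB})/p_Ā). Then the characteristic polynomial of the product M₁·M₂ is (X − 1)·(X − T) with T = (p_{AB} − p_A·p_B)²/(p_A·p_Ā·p_B·p_B̄); in particular the eigenvalues of M₁·M₂ are 1 and T. -/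
/-!
Both matrices are row-stochastic, so their product `M` is too. A `2 × 2` matrix `!![a, 1 - a; b, 1 - b]`
has determinant `a - b` and trace `1 + (a - b)`, so every row-stochastic `2 × 2` matrix has the
eigenvalue `1` and characteristic polynomial `(X - 1)(X - det M)`. Finally
`det M₁ = (p_{AB} - p_A p_B)/(p_B p_B̄)` and `det M₂ = (p_{AB} - p_A p_B)/(p_A p_Ā)`, whose product is `T`.
-/

open Polynomial

namespace Matrix

variable {R : Type*} [CommRing R]

def binaryStochastic (a b : R) : Matrix (Fin 2) (Fin 2) R :=
  !![a, 1 - a; b, 1 - b]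

lemma binaryStochastic_mulVec_one (a b : R) : binaryStochastic a b *ᵥ 1 = 1 := by
  ext i
  fin_cases i <;> simp [binaryStochastic, mulVec, dotProduct, Fin.sum_univ_two]

lemma det_binaryStochastic (a b : R) : (binaryStochastic a b).det = a - b := by
  rw [binaryStochastic, det_fin_two_of]
  ring

lemma charpoly_fin_two_of_mulVec_one [Nontrivial R] {A : Matrix (Fin 2) (Fin 2) R}
    (hA : A *ᵥ 1 = 1) : A.charpoly = (X - C 1) * (X - C A.det) := by
  have hrow : ∀ i, A i 0 + A i 1 = 1 := fun i => by
    simpa [mulVec, dotProduct, Fin.sum_univ_two] using congrFun hA i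
  have htrace : A.trace = 1 + A.det := by
    rw [trace_fin_two, det_fin_two]
    linear_combination A 1 0 * hrow 0 + (1 - A 0 0) * hrow 1
  rw [charpoly_fin_two, htrace, map_add, map_one]
  ring

lemma spectrum_eq_of_charpoly_eq_mul {K n : Type*} [Field K] [Fintype n] [DecidableEq n]
    {A : Matrix n n K} {a b : K} (h : A.charpoly = (X - C a) * (X - C b)) :
    spectrum K A = {a, b} := by
  ext μ
  simp [mem_spectrum_iff_isRoot_charpoly, h, sub_eq_zero]

end Matrix

open Matrix in
/-- The product of the two conditional-probability matrices `P_{𝒜|ℬ}` and `P_{ℬ|𝒜}` has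
characteristic polynomial `(X − 1)(X − T)` with
`T = (p_{AB} − p_A p_B)²/(p_A p_Ā p_B p_B̄)`; in particular its eigenvalues are `1` and `T`. -/
theorem stmt_17 (pA pB pAB : ℝ) (hA0 : 0 < pA) (hA1 : pA < 1) (hB0 : 0 < pB) (hB1 : pB < 1)
    (M₁ M₂ : Matrix (Fin 2) (Fin 2) ℝ) (T : ℝ)
    (hM₁ : M₁ = !![pAB / pB, 1 - pAB / pB;
                   (pA - pAB) / (1 - pB), 1 - (pA - pAB) / (1 - pB)])
    (hM₂ : M₂ = !![pAB / pA, 1 - pAB / pA;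
                   (pB - pAB) / (1 - pA), 1 - (pB - pAB) / (1 - pA)])
    (hT : T = (pAB - pA * pB) ^ 2 / (pA * (1 - pA) * pB * (1 - pB))) :
    (M₁ * M₂).charpoly = (X - C 1) * (X - C T) ∧
      spectrum ℝ (M₁ * M₂) = {1, T} := by
  change M₁ = binaryStochastic _ _ at hM₁
  change M₂ = binaryStochastic _ _ at hM₂
  have hstoch : (M₁ * M₂) *ᵥ 1 = 1 := by
    rw [← mulVec_mulVec, hM₁, hM₂, binaryStochastic_mulVec_one, binaryStochastic_mulVec_one]
  have hdet : (M₁ * M₂).det = T := by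
    have : 1 - pA ≠ 0 := by linarith
    have : 1 - pB ≠ 0 := by linarith
    rw [det_mul, hM₁, hM₂, det_binaryStochastic, det_binaryStochastic, hT]
    field_simp
    ring
  have hcharpoly := charpoly_fin_two_of_mulVec_one hstoch
  rw [hdet] at hcharpoly
  exact ⟨hcharpoly, spectrum_eq_of_charpoly_eq_mul hcharpoly⟩
end

section
/- Let s = P(f)·(p_A − p_{AB}) − E[f|A]·p_A·p_B̄ + E[f|B]·(p_{AB} − p_A·p_B). Then E[f|A] − P(B|A)·E[f|B] − P(Bᶜ|A)·E[f|Bᶜ] = −s/(p_A·p_B̄) and E[f|Aᶜ] − P(B|Aᶜ)·E[f|B] − P(Bᶜ|Aᶜ)·E[f|Bᶜ] = s/(p_Ā·p_B̄); that is, the vector V₁(f) = (E[f|A], E[f|Aᶜ]) − P_{ℬ|𝒜}·(E[f|B], E[f|Bᶜ]) equals s·(−1/(p_A·p_B̄), 1/(p_Ā·p_B̄)). -/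
/-! By additivity, every probability and partial integral in the statement is expressed through
`p_A`, `p_B`, `p_{AB}`, `P(f)`, `∫_A f` and `∫_B f` (e.g. `P(Bᶜ ∩ Aᶜ) = 1 - p_A - p_B + p_{AB}` and
`∫_{Bᶜ} f = P(f) - ∫_B f`); both components then become identities of rational functions. -/

open MeasureTheory

section
variable {Ω : Type*} [MeasurableSpace Ω] {μ : Measure Ω}

lemma integral_mul_indicator_one (f : Ω → ℝ) {C : Set Ω} (hC : MeasurableSet C) :
    ∫ x, f x * C.indicator 1 x ∂μ = ∫ x in C, f x ∂μ := by
  simp_rw [← Set.indicator_mul_right, Pi.one_apply, mul_one]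
  exact integral_indicator hC

lemma measureReal_compl_inter [IsFiniteMeasure μ] {C : Set Ω} (hC : MeasurableSet C)
    (D : Set Ω) : μ.real (Cᶜ ∩ D) = μ.real D - μ.real (C ∩ D) := by
  rw [Set.inter_comm Cᶜ, ← Set.sdiff_eq, ← measureReal_inter_add_sdiff (s := D) hC,
    Set.inter_comm C]
  ring

lemma probReal_compl_ne_zero [IsProbabilityMeasure μ] {C : Set Ω} (hC : MeasurableSet C)
    (h : μ C < 1) : μ.real Cᶜ ≠ 0 :=
  (measureReal_ne_zero_iff).2 <| (prob_compl_eq_zero_iff hC).not.2 h.ne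

end

/-- The vector `V₁(f) = (E[f|A], E[f|Aᶜ]) − P_{ℬ|𝒜}·(E[f|B], E[f|Bᶜ])` equals
`s·(−1/(p_A p_B̄), 1/(p_Ā p_B̄))` with
`s = P(f)(p_A − p_{AB}) − E[f|A] p_A p_B̄ + E[f|B](p_{AB} − p_A p_B)`, stated componentwise. -/
theorem stmt_18 {𝒳 : Type*} [MeasurableSpace 𝒳] (P : Measure 𝒳) [IsProbabilityMeasure P]
    (f : 𝒳 → ℝ) (hf : Measurable f) (M : ℝ) (hfb : ∀ x, |f x| ≤ M)
    (A B : Set 𝒳) (hA : MeasurableSet A) (hB : MeasurableSet B)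
    (hA0 : 0 < P A) (hA1 : P A < 1) (hB0 : 0 < P B) (hB1 : P B < 1)
    (pA pAbar pB pBbar pAB Pf EfA EfAc EfB EfBc s : ℝ)
    (hpA : pA = (P A).toReal) (hpAbar : pAbar = (P Aᶜ).toReal)
    (hpB : pB = (P B).toReal) (hpBbar : pBbar = (P Bᶜ).toReal)
    (hpAB : pAB = (P (A ∩ B)).toReal)
    (hPf : Pf = ∫ x, f x ∂P)
    (hEfA : EfA = (∫ x, f x * A.indicator (1 : 𝒳 → ℝ) x ∂P) / pA)
    (hEfAc : EfAc = (∫ x, f x * Aᶜ.indicator (1 : 𝒳 → ℝ) x ∂P) / pAbar)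
    (hEfB : EfB = (∫ x, f x * B.indicator (1 : 𝒳 → ℝ) x ∂P) / pB)
    (hEfBc : EfBc = (∫ x, f x * Bᶜ.indicator (1 : 𝒳 → ℝ) x ∂P) / pBbar)
    (hs : s = Pf * (pA - pAB) - EfA * pA * pBbar + EfB * (pAB - pA * pB)) :
    EfA - (P (B ∩ A)).toReal / pA * EfB - (P (Bᶜ ∩ A)).toReal / pA * EfBc
        = -s / (pA * pBbar) ∧
      EfAc - (P (B ∩ Aᶜ)).toReal / pAbar * EfB - (P (Bᶜ ∩ Aᶜ)).toReal / pAbar * EfBc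
        = s / (pAbar * pBbar) := by
  have hfi : Integrable f P :=
    .of_bound hf.aestronglyMeasurable M (.of_forall fun x => (Real.norm_eq_abs _).trans_le (hfb x))
  simp only [← measureReal_def] at *
  have hpA0 : pA ≠ 0 := hpA ▸ (measureReal_ne_zero_iff).2 hA0.ne'
  have hpB0 : pB ≠ 0 := hpB ▸ (measureReal_ne_zero_iff).2 hB0.ne'
  have hpAbar0 : pAbar ≠ 0 := hpAbar ▸ probReal_compl_ne_zero hA hA1
  have hpBbar0 : pBbar ≠ 0 := hpBbar ▸ probReal_compl_ne_zero hB hB1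
  rw [probReal_compl_eq_one_sub hA, ← hpA] at hpAbar
  rw [probReal_compl_eq_one_sub hB, ← hpB] at hpBbar
  rw [measureReal_compl_inter hB A, measureReal_compl_inter hB Aᶜ, Set.inter_comm B Aᶜ,
    measureReal_compl_inter hA B, Set.inter_comm B A, probReal_compl_eq_one_sub hA,
    ← hpA, ← hpB, ← hpAB]
  simp only [integral_mul_indicator_one f, hA, hB, hA.compl, hB.compl, setIntegral_compl, hfi,
    ← hPf] at hEfA hEfAc hEfB hEfBc
  subst hs hEfA hEfAc hEfB hEfBc hpAbar hpBbar
  constructor <;> · field_simp; ring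
end
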